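/- For every real number m there exist constants C > 0 and R₀ ≥ 1 such that for all ρ ≥ R₀, |∫_ρ^{ρ+1} t^m e^{-t²/4} dt − (2/ρ) ρ^m e^{-ρ²/4}| ≤ C ρ^{-2} · ρ^m e^{-ρ²/4}. -/

import Mathlib

open Real MeasureTheory

/-!
Write `Φ_k(t) = t^k e^{-t²/4}`. Since `d/dt (-2 Φ_{m-1}) = Φ_m - 2(m-1) Φ_{m-2}`,
integration by parts gives
`∫_ρ^{ρ+1} Φ_m = (2/ρ) Φ_m(ρ) - 2 Φ_{m-1}(ρ+1) + 2(m-1) ∫_ρ^{ρ+1} Φ_{m-2}`.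
On `[ρ, ρ+1]` we have `t^k ≤ 2^|k| ρ^k`, so the last integral is `O(ρ^{m-2} e^{-ρ²/4})`, and
`Φ_{m-1}(ρ+1)` carries the extra factor `e^{-ρ/2} ≤ 2/ρ`, so it is of the same order.
-/

noncomputable def gaussPow (m t : ℝ) : ℝ := t ^ m * exp (-t ^ 2 / 4)

lemma gaussPow_pos {m t : ℝ} (ht : 0 < t) : 0 < gaussPow m t := by
  unfold gaussPow; have := rpow_pos_of_pos ht m; positivity

lemma continuousOn_gaussPow (m : ℝ) : ContinuousOn (gaussPow m) (Set.Ioi 0) := by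
  unfold gaussPow
  exact (continuousOn_id.rpow_const fun t ht => Or.inl (ne_of_gt ht)).mul (by fun_prop)

lemma hasDerivAt_gaussPow (m : ℝ) {t : ℝ} (ht : 0 < t) :
    HasDerivAt (gaussPow m) (m * gaussPow (m - 1) t - gaussPow (m + 1) t / 2) t := by
  have h := ((hasDerivAt_id t).rpow_const (p := m) (Or.inl ht.ne')).fun_mul
    (((hasDerivAt_pow 2 t).fun_neg.div_const 4).exp)
  refine h.congr_deriv ?_
  simp only [gaussPow, id, rpow_add ht, rpow_sub_one ht.ne', rpow_one]
  field_simp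
  ring

lemma integral_gaussPow_eq {a b : ℝ} (ha : 0 < a) (hab : a ≤ b) (m : ℝ) :
    ∫ t in a..b, gaussPow m t =
      2 * gaussPow (m - 1) a - 2 * gaussPow (m - 1) b
        + 2 * (m - 1) * ∫ t in a..b, gaussPow (m - 2) t := by
  have hsub : Set.uIcc a b ⊆ Set.Ioi 0 := by
    rw [Set.uIcc_of_le hab]; exact fun t ht => ha.trans_le ht.1
  have hint : ∀ k, IntervalIntegrable (gaussPow k) volume a b := fun k =>
    ((continuousOn_gaussPow k).mono hsub).intervalIntegrable
  have hderiv : ∀ t ∈ Set.uIcc a b, HasDerivAt (fun t => 2 * gaussPow (m - 1) t)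
      (2 * (m - 1) * gaussPow (m - 2) t - gaussPow m t) t := by
    intro t ht
    refine ((hasDerivAt_gaussPow (m - 1) (hsub ht)).const_mul 2).congr_deriv ?_
    ring_nf
  have := intervalIntegral.integral_eq_sub_of_hasDerivAt hderiv
    (((hint (m - 2)).const_mul _).sub (hint m))
  rw [intervalIntegral.integral_sub ((hint (m - 2)).const_mul _) (hint m),
    intervalIntegral.integral_const_mul] at this
  linarith

lemma rpow_le_two_rpow_abs_mul {ρ t : ℝ} (hρ : 0 < ρ) (hρt : ρ ≤ t) (ht : t ≤ 2 * ρ)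
    (k : ℝ) :
    t ^ k ≤ 2 ^ |k| * ρ ^ k := by
  have hq : 1 ≤ t / ρ := (one_le_div hρ).2 hρt
  calc t ^ k = (t / ρ) ^ k * ρ ^ k := by
        rw [← mul_rpow (by positivity) hρ.le, div_mul_cancel₀ _ hρ.ne']
    _ ≤ (t / ρ) ^ |k| * ρ ^ k := by
        gcongr ?_ * _
        exact rpow_le_rpow_of_exponent_le hq (le_abs_self k)
    _ ≤ 2 ^ |k| * ρ ^ k := by gcongr; rwa [div_le_iff₀ hρ]

lemma gaussPow_le {ρ t : ℝ} (hρ : 1 ≤ ρ) (hρt : ρ ≤ t) (ht : t ≤ ρ + 1) (k : ℝ) :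
    gaussPow k t ≤ 2 ^ |k| * ρ ^ k * exp (-ρ ^ 2 / 4) * exp (-(ρ * (t - ρ)) / 2) := by
  rw [gaussPow, mul_assoc _ (exp _), ← exp_add]
  gcongr
  · exact rpow_le_two_rpow_abs_mul (by linarith) hρt (by linarith) k
  · nlinarith

lemma abs_integral_gaussPow_le {ρ : ℝ} (hρ : 1 ≤ ρ) (k : ℝ) :
    |∫ t in ρ..ρ + 1, gaussPow k t| ≤ 2 ^ |k| * ρ ^ k * exp (-ρ ^ 2 / 4) := by
  have := intervalIntegral.norm_integral_le_of_norm_le_const (a := ρ) (b := ρ + 1)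
    (C := 2 ^ |k| * ρ ^ k * exp (-ρ ^ 2 / 4)) (f := gaussPow k) fun t ht => by
      rw [Set.uIoc_of_le (by linarith)] at ht
      rw [norm_of_nonneg (gaussPow_pos (by linarith [ht.1])).le]
      refine (gaussPow_le hρ ht.1.le ht.2 k).trans (mul_le_of_le_one_right (by positivity) ?_)
      exact exp_le_one_iff.2 (by nlinarith [ht.1])
  simpa using this

lemma mul_exp_neg_half_le_two (x : ℝ) : x * exp (-(x / 2)) ≤ 2 := by
  have := add_one_le_exp (x / 2)
  rw [exp_neg, ← div_eq_mul_inv, div_le_iff₀ (exp_pos _)]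
  linarith

lemma gaussPow_add_one_le {ρ : ℝ} (hρ : 1 ≤ ρ) (k : ℝ) :
    gaussPow k (ρ + 1) ≤ 2 * 2 ^ |k| * ρ ^ (k - 1) * exp (-ρ ^ 2 / 4) := by
  have hρ0 : 0 < ρ := by linarith
  calc gaussPow k (ρ + 1)
      ≤ 2 ^ |k| * ρ ^ (k - 1) * exp (-ρ ^ 2 / 4) * (ρ * exp (-(ρ / 2))) := by
        convert gaussPow_le hρ (by linarith) le_rfl k using 1
        rw [rpow_sub_one hρ0.ne']
        field_simp
        ring_nf
    _ ≤ 2 ^ |k| * ρ ^ (k - 1) * exp (-ρ ^ 2 / 4) * 2 := by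
        gcongr; exact mul_exp_neg_half_le_two ρ
    _ = 2 * 2 ^ |k| * ρ ^ (k - 1) * exp (-ρ ^ 2 / 4) := by ring

/-- `∫_ρ^{ρ+1} Φ_m = (2/ρ)Φ_m(ρ)(1 + O(ρ^{-2}))`. -/
theorem stmt_1 (m : ℝ) :
    ∃ C > (0 : ℝ), ∃ R₀ ≥ (1 : ℝ), ∀ ρ ≥ R₀,
      |(∫ t in ρ..(ρ + 1), t ^ m * Real.exp (-t ^ 2 / 4))
          - 2 / ρ * (ρ ^ m * Real.exp (-ρ ^ 2 / 4))|
        ≤ C * ρ ^ (-2 : ℝ) * (ρ ^ m * Real.exp (-ρ ^ 2 / 4)) := by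
  refine ⟨4 * 2 ^ |m - 1| + 2 * |m - 1| * 2 ^ |m - 2|, by positivity, 1, le_rfl,
    fun ρ hρ => ?_⟩
  have hρ0 : 0 < ρ := by linarith
  have hleading : 2 / ρ * gaussPow m ρ = 2 * gaussPow (m - 1) ρ := by
    rw [gaussPow, gaussPow, rpow_sub_one hρ0.ne']; ring
  have hscale : ρ ^ (m - 2) = ρ ^ (-2 : ℝ) * ρ ^ m := by
    rw [← rpow_add hρ0]; ring_nf
  change |(∫ t in ρ..ρ + 1, gaussPow m t) - 2 / ρ * gaussPow m ρ| ≤ _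
  rw [integral_gaussPow_eq hρ0 (by linarith), hleading]
  have hbdry := gaussPow_add_one_le hρ (m - 1)
  have hint := abs_integral_gaussPow_le hρ (m - 2)
  have hbdry_nonneg := (gaussPow_pos (m := m - 1) (by linarith : (0 : ℝ) < ρ + 1)).le
  calc _ = |2 * (m - 1) * (∫ t in ρ..ρ + 1, gaussPow (m - 2) t)
          - 2 * gaussPow (m - 1) (ρ + 1)| := by ring_nf
    _ ≤ 2 * |m - 1| * |∫ t in ρ..ρ + 1, gaussPow (m - 2) t|
          + 2 * gaussPow (m - 1) (ρ + 1) := by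
        refine (abs_sub _ _).trans ?_
        rw [abs_mul, abs_mul, abs_two,
          abs_of_nonneg (mul_nonneg zero_le_two hbdry_nonneg)]
    _ ≤ 2 * |m - 1| * (2 ^ |m - 2| * ρ ^ (m - 2) * exp (-ρ ^ 2 / 4))
          + 2 * (2 * 2 ^ |m - 1| * ρ ^ (m - 1 - 1) * exp (-ρ ^ 2 / 4)) := by gcongr
    _ = _ := by
        rw [show m - 1 - 1 = m - 2 by ring, hscale]; ring
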